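/- For Poole's broken-arm theory AT_arm = ({w ⇒ ¬r}, {l ∨ r, w}): the argument A = ⟨⟨⟨w⟩ ⇒ ¬r⟩, ⟨l ∨ r⟩ → l⟩ is a well-formed consistent argument (†A ⊬ ⊥, noting ¬r, l∨r ⊢ l classically), no argument in the framework attacks A, and hence A belongs to every complete extension of the associated SAF, so l is a grounded consequence. -/

import Mathlib

/-- Propositional formulas over countably many atoms. -/
inductive PForm where
  | atom : ℕ → PForm
  | top : PForm
  | bot : PForm
  | neg : PForm → PForm
  | conj : PForm → PForm → PForm
  | disj : PForm → PForm → PForm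
  deriving DecidableEq

/-- Classical evaluation of a formula under a valuation. -/
def PForm.eval (v : ℕ → Prop) : PForm → Prop
  | .atom n => v n
  | .top => True
  | .bot => False
  | .neg φ => ¬ φ.eval v
  | .conj φ ψ => φ.eval v ∧ ψ.eval v
  | .disj φ ψ => φ.eval v ∨ ψ.eval v

/-- Classical (semantic) consequence: `Γ ⊢ φ`. -/
def Entails (Γ : Set PForm) (φ : PForm) : Prop :=
  ∀ v : ℕ → Prop, (∀ ψ ∈ Γ, ψ.eval v) → φ.eval v

/-- Conjunction of a list of formulas. -/
def conjList : List PForm → PForm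
  | [] => .top
  | [φ] => φ
  | φ :: rest => .conj φ (conjList rest)

/-- Disjunction of a list of formulas. -/
def disjList : List PForm → PForm
  | [] => .bot
  | [φ] => φ
  | φ :: rest => .disj φ (disjList rest)

/-- A defeasible rule: antecedents and a consequent. -/
abbrev Rule := List PForm × PForm

/-- Arguments: premise arguments, strict-rule applications, defeasible-rule
applications, and rbc-arguments `⟨A₁,[A₂],…,[Aₙ] ⇝ φ⟩`, where each bracketed
hypothetical argument is stored together with its assumption ψᵢ. -/
inductive Arg where
  | prem : PForm → Arg
  | strict : List Arg → PForm → Arg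
  | defeas : List Arg → PForm → Arg
  | rbc : Arg → List (Arg × PForm) → PForm → Arg

/-- The conclusion of an argument. -/
def Conc : Arg → PForm
  | .prem φ => φ
  | .strict _ φ => φ
  | .defeas _ φ => φ
  | .rbc _ _ φ => φ

mutual
/-- The formula `†A` associated with an argument `A`. -/
def dagger : Arg → PForm
  | .prem φ => φ
  | .strict as φ => conjList (φ :: daggerList as)
  | .defeas as φ => conjList (φ :: daggerList as)
  | .rbc a bs φ => .conj φ (.conj (dagger a) (disjList (daggerPairs bs)))
def daggerList : List Arg → List PForm
  | [] => []
  | a :: as => dagger a :: daggerList as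
def daggerPairs : List (Arg × PForm) → List PForm
  | [] => []
  | b :: bs => dagger b.1 :: daggerPairs bs
end

mutual
/-- The sub-arguments of an argument. -/
def subArgs : Arg → List Arg
  | .prem φ => [.prem φ]
  | .strict as φ => .strict as φ :: subArgsList as
  | .defeas as φ => .defeas as φ :: subArgsList as
  | .rbc a bs φ => .rbc a bs φ :: subArgs a
def subArgsList : List Arg → List Arg
  | [] => []
  | a :: as => subArgs a ++ subArgsList as
end

mutual
/-- The hypothetical sub-arguments of an argument: pairs of an argument and
the assumption it is based on. -/
def hsubArgs : Arg → List (Arg × PForm)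
  | .prem _ => []
  | .strict as _ => hsubArgsList as
  | .defeas as _ => hsubArgsList as
  | .rbc a bs _ => hsubArgs a ++ bs
def hsubArgsList : List Arg → List (Arg × PForm)
  | [] => []
  | a :: as => hsubArgs a ++ hsubArgsList as
end

/-- Well-formed arguments over the defeasible rules `D` and knowledge base `F`
(with strict rules given by classical consequence). -/
inductive WF (D : Set Rule) : Set PForm → Arg → Prop
  | prem {F : Set PForm} {φ : PForm} : φ ∈ F → WF D F (.prem φ)
  | strict {F : Set PForm} {as : List Arg} {φ : PForm} :
      (∀ a ∈ as, WF D F a) →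
      Entails {ψ | ∃ a ∈ as, Conc a = ψ} φ →
      WF D F (.strict as φ)
  | defeas {F : Set PForm} {as : List Arg} {φ : PForm} :
      (∀ a ∈ as, WF D F a) →
      (as.map Conc, φ) ∈ D →
      WF D F (.defeas as φ)
  | rbc {F : Set PForm} {a : Arg} {bs : List (Arg × PForm)} {φ : PForm} :
      WF D F a →
      2 ≤ bs.length →
      Conc a = disjList (bs.map Prod.snd) →
      φ = disjList ((bs.map (fun b => Conc b.1)).dedup) →
      (∀ b ∈ bs, WF D (insert b.2 F) b.1) →
      (∀ b ∈ bs, hsubArgs b.1 = []) →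
      WF D F (.rbc a bs φ)

/-- An argument is consistent iff `†A ⊬ ⊥`. -/
def ArgConsistent (A : Arg) : Prop := ¬ Entails {dagger A} .bot

/-- `Arg(AT)`: the consistent well-formed arguments of the theory `(D,F)`. -/
def ArgAT (D : Set Rule) (F : Set PForm) : Set Arg :=
  {A | WF D F A ∧ ArgConsistent A}

/-- `Arg^φ(AT) = Arg(D, F ∪ {φ}) \ Arg(D, F)`. -/
def ArgHyp (D : Set Rule) (F : Set PForm) (φ : PForm) : Set Arg :=
  ArgAT D (insert φ F) \ ArgAT D F

/-- `HArg(AT)`: hypothetical arguments based on an assumption used in some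
rbc-argument of the theory. -/
def HArgAT (D : Set Rule) (F : Set PForm) : Set Arg :=
  {A | ∃ φ : PForm, A ∈ ArgHyp D F φ ∧
    ∃ B ∈ ArgAT D F, ∃ p ∈ hsubArgs B, p.2 = φ}

/-- `B` ends in a defeasible rule application. -/
def IsDefApp : Arg → Prop
  | .defeas _ _ => True
  | _ => False

/-- Conflicting conclusions: one is the classical negation of the other. -/
def Conflicts (A B : Arg) : Prop :=
  Conc A = .neg (Conc B) ∨ Conc B = .neg (Conc A)

/-- Direct attack in the SAF of the theory `(D,F)`. -/
def DirectAttack (D : Set Rule) (F : Set PForm) (A B : Arg) : Prop :=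
  IsDefApp B ∧ Conflicts A B ∧
    ((A ∈ ArgAT D F ∧ B ∈ ArgAT D F) ∨
     (A ∈ ArgAT D F ∧ B ∈ HArgAT D F) ∨
     (∃ φ : PForm, φ ∉ F ∧ A ∈ ArgHyp D F φ ∧ B ∈ ArgHyp D F φ))

/-- The attack relation, lifted to sub-arguments and hypothetical
sub-arguments. -/
inductive Attacks (D : Set Rule) (F : Set PForm) : Arg → Arg → Prop
  | direct {A B : Arg} : DirectAttack D F A B → Attacks D F A B
  | sub {A B C : Arg} : C ∈ subArgs B → C ≠ B → Attacks D F A C → Attacks D F A B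
  | hsub {A B C : Arg} {ψ : PForm} : (C, ψ) ∈ hsubArgs B → Attacks D F A C →
      Attacks D F A B

/-- The set of arguments of the SAF of `(D,F)`. -/
def SAFArgs (D : Set Rule) (F : Set PForm) : Set Arg :=
  ArgAT D F ∪ HArgAT D F

/-- `E` is conflict-free. -/
def ConflictFree (att : Arg → Arg → Prop) (E : Set Arg) : Prop :=
  ∀ A ∈ E, ∀ B ∈ E, ¬ att A B

/-- `E` defends `A` within the universe `U`. -/
def Defends (U : Set Arg) (att : Arg → Arg → Prop) (E : Set Arg) (A : Arg) :
    Prop :=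
  ∀ B ∈ U, att B A → ∃ C ∈ E, att C B

/-- `E` is a complete extension of the framework with universe `U`. -/
def CompleteExt (U : Set Arg) (att : Arg → Arg → Prop) (E : Set Arg) : Prop :=
  E ⊆ U ∧ ConflictFree att E ∧ ∀ A ∈ U, (A ∈ E ↔ Defends U att E A)

/-- Poole's broken-arm theory: rules `{w ⇒ ¬r}` (l = atom 0, r = atom 1,
w = atom 2). -/
def Darm : Set Rule := {([.atom 2], .neg (.atom 1))}

/-- The knowledge base `{l ∨ r, w}`. -/
def Farm : Set PForm := {.disj (.atom 0) (.atom 1), .atom 2}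

/-- The argument `A = ⟨⟨⟨w⟩ ⇒ ¬r⟩, ⟨l ∨ r⟩ → l⟩`. -/
def armArg : Arg :=
  .strict [.defeas [.prem (.atom 2)] (.neg (.atom 1)),
           .prem (.disj (.atom 0) (.atom 1))] (.atom 0)

/-! The valuation making `l` and `w` true and `r` false satisfies the knowledge base and
the rule `w ⇒ ¬r`, so by soundness every argument of the theory has a true conclusion.
Hence no argument concludes `r` or `¬¬r`, and the only defeasible sub-argument
`⟨⟨w⟩ ⇒ ¬r⟩` of `A` has no attacker. An unattacked argument is defended by every set,
so it lies in every complete extension. -/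

section Soundness

variable {v : ℕ → Prop}

theorem PForm.eval_disjList : ∀ L : List PForm, (disjList L).eval v ↔ ∃ φ ∈ L, φ.eval v
  | [] => by simp [disjList, PForm.eval]
  | [φ] => by simp [disjList]
  | φ :: ψ :: rest => by
      simp [disjList, PForm.eval, PForm.eval_disjList (ψ :: rest)]

theorem ArgConsistent.of_eval_dagger {A : Arg} (h : (dagger A).eval v) : ArgConsistent A :=
  fun hent => hent v (by rintro ψ rfl; exact h)

theorem WF.eval_conc {D : Set Rule} (hD : ∀ r ∈ D, (∀ φ ∈ r.1, φ.eval v) → r.2.eval v)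
    {F : Set PForm} {A : Arg} (h : WF D F A) (hF : ∀ φ ∈ F, φ.eval v) : (Conc A).eval v := by
  induction h with
  | prem hφ => exact hF _ hφ
  | strict _ hent ih => exact hent v (by rintro ψ ⟨a, ha, rfl⟩; exact ih a ha hF)
  | defeas _ hrule ih => exact hD _ hrule (by simpa using fun a ha => ih a ha hF)
  | rbc _ _ hconc hφ _ _ iha ihbs =>
      obtain ⟨ψ, hψ, hψv⟩ := (PForm.eval_disjList _).mp (hconc ▸ iha hF)
      obtain ⟨b, hb, rfl⟩ := List.mem_map.mp hψ
      have hbv : (Conc b.1).eval v := ihbs b hb (by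
        rintro φ (rfl | hφF)
        exacts [hψv, hF φ hφF])
      rw [Conc, hφ, PForm.eval_disjList]
      exact ⟨_, List.mem_dedup.mpr (List.mem_map_of_mem hb), hbv⟩

end Soundness

section Attacks

variable {D : Set Rule} {F : Set PForm}

theorem Attacks.exists_directAttack {S : Set Arg}
    (hsub : ∀ B ∈ S, ∀ C ∈ subArgs B, C ∈ S)
    (hhsub : ∀ B ∈ S, ∀ p ∈ hsubArgs B, p.1 ∈ S)
    {X B : Arg} (h : Attacks D F X B) (hB : B ∈ S) : ∃ C ∈ S, DirectAttack D F X C := by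
  induction h with
  | direct hd => exact ⟨_, hB, hd⟩
  | sub hC _ _ ih => exact ih (hsub _ hB _ hC)
  | hsub hC _ ih => exact ih (hhsub _ hB _ hC)

theorem DirectAttack.mem_argAT_left {X B : Arg} (h : DirectAttack D F X B)
    (hB : B ∈ ArgAT D F) : X ∈ ArgAT D F := by
  obtain ⟨-, -, ⟨hX, -⟩ | ⟨hX, -⟩ | ⟨_, -, -, hB'⟩⟩ := h
  exacts [hX, hX, absurd hB hB'.2]

end Attacks

theorem CompleteExt.mem_of_forall_not_attacks {U E : Set Arg} {att : Arg → Arg → Prop}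
    (hE : CompleteExt U att E) {A : Arg} (hA : A ∈ U) (hnot : ∀ B ∈ U, ¬ att B A) :
    A ∈ E :=
  (hE.2.2 A hA).mpr fun B hB hatt => absurd hatt (hnot B hB)

section BrokenArm

def armValuation : ℕ → Prop := fun n => n ≠ 1

theorem eval_conc_armValuation {A : Arg} (h : WF Darm Farm A) : (Conc A).eval armValuation := by
  refine h.eval_conc ?_ ?_
  · rintro _ rfl -
    simp [PForm.eval, armValuation]
  · rintro φ (rfl | rfl) <;> simp [PForm.eval, armValuation]

def armDefeasible : Arg := .defeas [.prem (.atom 2)] (.neg (.atom 1))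

theorem armDefeasible_mem_argAT : armDefeasible ∈ ArgAT Darm Farm := by
  refine ⟨.defeas ?_ (by simp [Darm, Conc]), .of_eval_dagger (v := armValuation) ?_⟩
  · simp only [List.mem_singleton, forall_eq]
    exact .prem (by simp [Farm])
  · simp [armDefeasible, dagger, daggerList, conjList, PForm.eval, armValuation]

theorem armArg_mem_argAT : armArg ∈ ArgAT Darm Farm := by
  refine ⟨.strict ?_ ?_, .of_eval_dagger (v := armValuation) ?_⟩
  · simp only [List.mem_cons, List.not_mem_nil, or_false, forall_eq_or_imp, forall_eq]
    exact ⟨armDefeasible_mem_argAT.1, .prem (by simp [Farm])⟩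
  · intro v hv
    have hnr := hv _ ⟨armDefeasible, by simp [armDefeasible], rfl⟩
    have hlr := hv _ ⟨.prem (.disj (.atom 0) (.atom 1)), by simp, rfl⟩
    simp only [Conc, armDefeasible, PForm.eval] at hnr hlr ⊢
    tauto
  · simp [armArg, dagger, daggerList, conjList, PForm.eval, armValuation]

def armSubArgs : Set Arg :=
  {armArg, armDefeasible, .prem (.atom 2), .prem (.disj (.atom 0) (.atom 1))}

theorem not_directAttack_armSubArgs {X C : Arg} (hC : C ∈ armSubArgs) :
    ¬ DirectAttack Darm Farm X C := by
  intro hd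
  obtain rfl : C = armDefeasible := by
    rcases hC with rfl | rfl | rfl | rfl
    all_goals first | rfl | exact absurd hd.1 (by simp [armArg, IsDefApp])
  have hX := eval_conc_armValuation (hd.mem_argAT_left armDefeasible_mem_argAT).1
  rcases hd.2.1 with hc | hc
  · rw [hc] at hX
    simp [armDefeasible, Conc, PForm.eval, armValuation] at hX
  · have hr : Conc X = .atom 1 := by simpa [armDefeasible, Conc] using hc.symm
    simp [hr, PForm.eval, armValuation] at hX

theorem subArgs_mem_armSubArgs : ∀ B ∈ armSubArgs, ∀ C ∈ subArgs B, C ∈ armSubArgs := by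
  rintro B (rfl | rfl | rfl | rfl) C hC <;>
    · simp only [armArg, armDefeasible, subArgs, subArgsList, List.mem_cons, List.mem_append,
        List.not_mem_nil, List.append_nil, or_false] at hC
      simp only [armSubArgs, armArg, armDefeasible, Set.mem_insert_iff, Set.mem_singleton_iff]
      tauto

theorem hsubArgs_armSubArgs : ∀ B ∈ armSubArgs, hsubArgs B = [] := by
  rintro B (rfl | rfl | rfl | rfl) <;> simp [armArg, armDefeasible, hsubArgs, hsubArgsList]

theorem not_attacks_armArg (X : Arg) : ¬ Attacks Darm Farm X armArg := by
  intro h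
  have hclosed : ∀ B ∈ armSubArgs, ∀ p ∈ hsubArgs B, p.1 ∈ armSubArgs := by
    intro B hB p hp
    simp [hsubArgs_armSubArgs B hB] at hp
  obtain ⟨C, hC, hd⟩ :=
    h.exists_directAttack subArgs_mem_armSubArgs hclosed (by simp [armSubArgs])
  exact not_directAttack_armSubArgs hC hd

end BrokenArm

/-- `A` is a well-formed consistent argument, no argument of the framework
attacks it, and it belongs to every complete extension, so `l` is a grounded
consequence. -/
theorem broken_arm :
    armArg ∈ ArgAT Darm Farm ∧
    (∀ B ∈ SAFArgs Darm Farm, ¬ Attacks Darm Farm B armArg) ∧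
    (∀ E : Set Arg, CompleteExt (SAFArgs Darm Farm) (Attacks Darm Farm) E →
      armArg ∈ E) :=
  ⟨armArg_mem_argAT, fun B _ => not_attacks_armArg B,
    fun _ hE => hE.mem_of_forall_not_attacks (Or.inl armArg_mem_argAT)
      fun B _ => not_attacks_armArg B⟩
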